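/- Let Ψ: ℤ → ℝ → ℂ be differentiable in t. Then Ψ satisfies the Ablowitz–Ladik discrete nonlinear Schrödinger equation -i·dΨ_k/dt = Ψ_{k+1} - 2Ψ_k + Ψ_{k-1} + |Ψ_k|²(Ψ_{k+1} + Ψ_{k-1}) for all k ∈ ℤ and all t if and only if the zero curvature condition d/dt L̂_k(μ) = M̂_{k+1}(μ)·L̂_k(μ) - L̂_k(μ)·M̂_k(μ) holds for all k ∈ ℤ, all t, and all μ ∈ ℂ with μ ≠ 0. -/

import Mathlib

open Matrix

noncomputable section

/-- Entrywise derivative of a matrix-valued function of a real variable. -/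
def matDeriv (A : ℝ → Matrix (Fin 2) (Fin 2) ℂ) (t : ℝ) : Matrix (Fin 2) (Fin 2) ℂ :=
  Matrix.of fun i j => deriv (fun s => A s i j) t

/-- The Ablowitz–Ladik Lax matrix `L̂_k(μ)`. -/
def Lhat (Ψ : ℤ → ℝ → ℂ) (μ : ℂ) (k : ℤ) (t : ℝ) : Matrix (Fin 2) (Fin 2) ℂ :=
  !![μ, Ψ k t; -(starRingEnd ℂ) (Ψ k t), μ⁻¹]

/-- The Ablowitz–Ladik Lax matrix `M̂_k(μ)`. -/
def Mhat (Ψ : ℤ → ℝ → ℂ) (μ : ℂ) (k : ℤ) (t : ℝ) : Matrix (Fin 2) (Fin 2) ℂ :=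
  !![μ ^ 2 * Complex.I - Complex.I + Complex.I * Ψ k t * (starRingEnd ℂ) (Ψ (k - 1) t),
      μ * Complex.I * Ψ k t - μ⁻¹ * Complex.I * Ψ (k - 1) t;
    -μ * Complex.I * (starRingEnd ℂ) (Ψ (k - 1) t)
        + μ⁻¹ * Complex.I * (starRingEnd ℂ) (Ψ k t),
      -μ⁻¹ ^ 2 * Complex.I + Complex.I - Complex.I * (starRingEnd ℂ) (Ψ k t) * Ψ (k - 1) t]

def alE (Ψ : ℤ → ℝ → ℂ) (k : ℤ) (t : ℝ) : ℂ :=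
  Ψ (k + 1) t - 2 * Ψ k t + Ψ (k - 1) t +
    Ψ k t * (starRingEnd ℂ) (Ψ k t) * (Ψ (k + 1) t + Ψ (k - 1) t)

lemma matDeriv_Lhat (Ψ : ℤ → ℝ → ℂ) (hΨ : ∀ k, Differentiable ℝ (Ψ k))
    (μ : ℂ) (k : ℤ) (t : ℝ) :
    matDeriv (fun s => Lhat Ψ μ k s) t =
      !![0, deriv (Ψ k) t; -(starRingEnd ℂ) (deriv (Ψ k) t), 0] := by
  have hd : HasDerivAt (fun s => -(starRingEnd ℂ) (Ψ k s))
      (-(starRingEnd ℂ) (deriv (Ψ k) t)) t := by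
    exact ((hΨ k t).hasDerivAt.star).neg
  have e00 : (fun s => Lhat Ψ μ k s 0 0) = fun _ => μ := by funext s; simp [Lhat]
  have e01 : (fun s => Lhat Ψ μ k s 0 1) = fun s => Ψ k s := by funext s; simp [Lhat]
  have e10 : (fun s => Lhat Ψ μ k s 1 0) = fun s => -(starRingEnd ℂ) (Ψ k s) := by
    funext s; simp [Lhat]
  have e11 : (fun s => Lhat Ψ μ k s 1 1) = fun _ => μ⁻¹ := by funext s; simp [Lhat]
  ext i j
  fin_cases i <;> fin_cases j <;>
    simp [matDeriv, e00, e01, e10, e11, hd.deriv]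

lemma commutator_eq (Ψ : ℤ → ℝ → ℂ) (μ : ℂ) (hμ : μ ≠ 0) (k : ℤ) (t : ℝ) :
    Mhat Ψ μ (k + 1) t * Lhat Ψ μ k t - Lhat Ψ μ k t * Mhat Ψ μ k t =
      !![0, Complex.I * alE Ψ k t; Complex.I * (starRingEnd ℂ) (alE Ψ k t), 0] := by
  have h1 : (k + 1 - 1 : ℤ) = k := by ring
  ext i j
  fin_cases i <;> fin_cases j <;>
  · simp [Mhat, Lhat, alE, Matrix.mul_apply, Fin.sum_univ_two, h1, map_add, map_sub, _root_.map_mul,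
      Complex.conj_I, map_ofNat]
    field_simp
    ring

/-- The Ablowitz–Ladik discrete nonlinear Schrödinger equation is equivalent to the
zero curvature condition for the Lax pair `(L̂, M̂)`. -/
theorem ablowitzLadik_iff_zeroCurvature (Ψ : ℤ → ℝ → ℂ)
    (hΨ : ∀ k, Differentiable ℝ (Ψ k)) :
    (∀ (k : ℤ) (t : ℝ),
        -Complex.I * deriv (Ψ k) t =
          Ψ (k + 1) t - 2 * Ψ k t + Ψ (k - 1) t +
            ((‖Ψ k t‖ : ℝ) : ℂ) ^ 2 * (Ψ (k + 1) t + Ψ (k - 1) t)) ↔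
      (∀ (k : ℤ) (t : ℝ) (μ : ℂ), μ ≠ 0 →
        matDeriv (fun s => Lhat Ψ μ k s) t =
          Mhat Ψ μ (k + 1) t * Lhat Ψ μ k t - Lhat Ψ μ k t * Mhat Ψ μ k t) := by
  have habs : ∀ (k : ℤ) (t : ℝ),
      ((‖Ψ k t‖ : ℝ) : ℂ) ^ 2 = Ψ k t * (starRingEnd ℂ) (Ψ k t) := by
    intro k t
    rw [Complex.mul_conj, Complex.normSq_eq_norm_sq]
    push_cast
    ring
  constructor
  · intro h k t μ hμ
    rw [matDeriv_Lhat Ψ hΨ, commutator_eq Ψ μ hμ]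
    have hd : deriv (Ψ k) t = Complex.I * alE Ψ k t := by
      unfold alE
      linear_combination Complex.I * h k t +
        Complex.I * (Ψ (k + 1) t + Ψ (k - 1) t) * habs k t +
        Complex.I_sq * deriv (Ψ k) t
    rw [hd, show -((starRingEnd ℂ) (Complex.I * alE Ψ k t)) =
      Complex.I * (starRingEnd ℂ) (alE Ψ k t) from by
        rw [_root_.map_mul, Complex.conj_I]; ring]
  · intro h k t
    have h1 := h k t 1 one_ne_zero
    rw [matDeriv_Lhat Ψ hΨ, commutator_eq Ψ 1 one_ne_zero] at h1
    have hd : deriv (Ψ k) t = Complex.I * alE Ψ k t := by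
      have := congrArg (fun M => M 0 1) h1
      simpa using this
    unfold alE at hd
    linear_combination -Complex.I * hd - (Ψ (k + 1) t + Ψ (k - 1) t) * habs k t -
      (Ψ (k + 1) t - 2 * Ψ k t + Ψ (k - 1) t +
        Ψ k t * (starRingEnd ℂ) (Ψ k t) * (Ψ (k + 1) t + Ψ (k - 1) t)) * Complex.I_sq
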